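/- Let M ∈ R^{n×n} have rank r with reduced SVD M = UΣV^T, let Ω ⊆ [n]×[n] be given, and suppose p ≥ 1/n. Then M is the unique optimal solution of the problem: minimize ‖X‖_* subject to X_{ij} = M_{ij} for (i,j) ∈ Ω, provided the following conditions hold: (1) ‖P_T R_Ω P_T − P_T‖_op ≤ 1/2; (2) there exists a matrix Y ∈ R^{n×n} with P_Ω(Y) = Y such that (a) ‖P_{T⊥}(Y)‖ ≤ 1/2 and (b) ‖P_T(Y) − UV^T‖_F ≤ 1/(4n). -/

import Mathlib

open MeasureTheory Matrix

noncomputable section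

/-- Frobenius norm of a real matrix. -/
def frobNorm {m n : ℕ} (X : Matrix (Fin m) (Fin n) ℝ) : ℝ :=
  Real.sqrt (∑ i, ∑ j, (X i j) ^ 2)

/-- Nuclear norm: sum of singular values (square roots of eigenvalues of XᵀX). -/
def nuclearNorm {m n : ℕ} (X : Matrix (Fin m) (Fin n) ℝ) : ℝ :=
  ∑ i, Real.sqrt ((show (Xᵀ * X).IsHermitian by
    rw [IsHermitian, conjTranspose_eq_transpose_of_trivial, transpose_mul,
      transpose_transpose]).eigenvalues i)

/-- Spectral norm: operator norm of the associated Euclidean linear map. -/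
def specNorm {m n : ℕ} (X : Matrix (Fin m) (Fin n) ℝ) : ℝ :=
  ‖(Matrix.toEuclideanLin X).toContinuousLinearMap‖

/-- Entrywise ℓ∞ norm. -/
def linf {m n : ℕ} (X : Matrix (Fin m) (Fin n) ℝ) : ℝ := ⨆ i, ⨆ j, |X i j|

/-- ℓ∞,2 norm: maximum of the largest row and column ℓ₂ norms. -/
def linf2 {n : ℕ} (X : Matrix (Fin n) (Fin n) ℝ) : ℝ :=
  max (⨆ i, Real.sqrt (∑ j, (X i j) ^ 2)) (⨆ j, Real.sqrt (∑ i, (X i j) ^ 2))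

/-- Operator norm (w.r.t. the Frobenius norm) of a map on n×n matrices. -/
def opNormMap {n : ℕ} (A : Matrix (Fin n) (Fin n) ℝ → Matrix (Fin n) (Fin n) ℝ) : ℝ :=
  ⨆ Z : {Z : Matrix (Fin n) (Fin n) ℝ // frobNorm Z ≤ 1}, frobNorm (A Z.1)

/-- P_Ω for a Boolean sample ω. -/
def projB {n : ℕ} (ω : Fin n × Fin n → Bool) (Z : Matrix (Fin n) (Fin n) ℝ) :
    Matrix (Fin n) (Fin n) ℝ := fun i j => if ω (i, j) then Z i j else 0

open Classical in
/-- P_Ω for a set Ω of indices. -/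
def projS {n : ℕ} (Ω : Set (Fin n × Fin n)) (Z : Matrix (Fin n) (Fin n) ℝ) :
    Matrix (Fin n) (Fin n) ℝ := fun i j => if (i, j) ∈ Ω then Z i j else 0

/-- The tangent-space projection P_T determined by U and V. -/
def projT {n r : ℕ} (U V : Matrix (Fin n) (Fin r) ℝ) (Z : Matrix (Fin n) (Fin n) ℝ) :
    Matrix (Fin n) (Fin n) ℝ :=
  U * Uᵀ * Z + Z * V * Vᵀ - U * Uᵀ * Z * V * Vᵀ

/-- Bernoulli(p) measure on Bool. -/
def bern (p : ℝ) : Measure Bool :=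
  ENNReal.ofReal p • Measure.dirac true + ENNReal.ofReal (1 - p) • Measure.dirac false

/-- Product Bernoulli(p) measure on index samples: each (i,j) observed independently
with probability p. -/
def sampleMeasure (n : ℕ) (p : ℝ) : Measure (Fin n × Fin n → Bool) :=
  Measure.pi fun _ => bern p

/-- ℓ₂ norm of the i-th row of U, i.e. ‖Uᵀ e_i‖₂. -/
def rowNorm {n r : ℕ} (U : Matrix (Fin n) (Fin r) ℝ) (i : Fin n) : ℝ :=
  Real.sqrt (∑ k, (U i k) ^ 2)

/-!
Write `Δ = X - M`, which vanishes on `Ω`, and split it as `G = P_T Δ` plus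
`E = Δ - G = (1 - UUᵀ) Δ (1 - VVᵀ)`. If `W` is dual to `E` (`‖W‖ ≤ 1`, `⟪W, E⟫ = ‖E‖_*`), then
`UVᵀ + (1 - UUᵀ) W (1 - VVᵀ)` has spectral norm at most `1`, and pairing it with `X` gives
`‖X‖_* ≥ ‖M‖_* + ⟪UVᵀ, Δ⟫ + ‖E‖_*`. Since `⟪Y, Δ⟫ = 0`, the certificate `Y` bounds
`⟪UVᵀ, Δ⟫ ≥ -‖G‖_F / (4n) - ‖E‖_* / 2`. Condition (1) gives `‖G‖_F² ≤ 2p⁻¹ ‖P_Ω G‖_F²`, and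
`P_Ω G = -P_Ω E`, so `p⁻¹ ≤ n` and `‖·‖_F ≤ ‖·‖_*` give `‖G‖_F ≤ √(2n) ‖E‖_*`. Hence
`‖X‖_* - ‖M‖_* ≥ (1/2 - √(2n)/(4n)) ‖E‖_* > 0`, where `E ≠ 0` because `E = 0` would force
`G = 0` and `Δ = 0`.
-/

open scoped Matrix.Norms.L2Operator RealInnerProductSpace
open WithLp (toLp)

section SpectralNorm

variable {m k l r : ℕ}

lemma specNorm_eq_norm (A : Matrix (Fin m) (Fin k) ℝ) : specNorm A = ‖A‖ := rfl

lemma isStarProjection_iff_transpose {A : Matrix (Fin k) (Fin k) ℝ} :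
    IsStarProjection A ↔ A * A = A ∧ Aᵀ = A := by
  rw [isStarProjection_iff, IsIdempotentElem, IsSelfAdjoint, star_eq_conjTranspose,
    conjTranspose_eq_transpose_of_trivial]

lemma norm_toLp_mulVec_le (A : Matrix (Fin m) (Fin k) ℝ) (x : Fin k → ℝ) :
    ‖toLp 2 (A *ᵥ x)‖ ≤ ‖A‖ * ‖toLp 2 x‖ :=
  l2_opNorm_mulVec A (toLp 2 x)

lemma norm_le_of_forall_mulVec {A : Matrix (Fin m) (Fin k) ℝ} {c : ℝ} (hc : 0 ≤ c)
    (h : ∀ x, ‖toLp 2 (A *ᵥ x)‖ ≤ c * ‖toLp 2 x‖) : ‖A‖ ≤ c :=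
  ContinuousLinearMap.opNorm_le_bound _ hc fun x => h x.ofLp

lemma norm_le_one_of_isStarProjection {A : Matrix (Fin m) (Fin k) ℝ}
    (h : IsStarProjection (Aᵀ * A)) : ‖A‖ ≤ 1 := by
  have h1 : ‖A‖ * ‖A‖ ≤ 1 := by
    rw [← l2_opNorm_conjTranspose_mul_self, conjTranspose_eq_transpose_of_trivial]
    exact h.norm_le _
  nlinarith [norm_nonneg A]

lemma norm_le_one_of_transpose_mul_self {U : Matrix (Fin m) (Fin r) ℝ} (hU : Uᵀ * U = 1) :
    ‖U‖ ≤ 1 :=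
  norm_le_one_of_isStarProjection (hU ▸ IsStarProjection.one _)

lemma isStarProjection_mul_transpose {U : Matrix (Fin m) (Fin r) ℝ} (hU : Uᵀ * U = 1) :
    IsStarProjection (U * Uᵀ) :=
  isStarProjection_iff_transpose.mpr ⟨by rw [Matrix.mul_assoc, ← Matrix.mul_assoc Uᵀ, hU,
    Matrix.one_mul], by rw [transpose_mul, transpose_transpose]⟩

lemma transpose_one_sub_mul_transpose (U : Matrix (Fin m) (Fin r) ℝ) :
    (1 - U * Uᵀ)ᵀ = 1 - U * Uᵀ := by
  rw [transpose_sub, transpose_one, transpose_mul, transpose_transpose]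

lemma one_sub_mul_transpose_mul {U : Matrix (Fin m) (Fin r) ℝ} (hU : Uᵀ * U = 1) :
    (1 - U * Uᵀ) * U = 0 := by
  rw [Matrix.sub_mul, Matrix.one_mul, Matrix.mul_assoc, hU, Matrix.mul_one, sub_self]

lemma transpose_mul_one_sub_mul_transpose {U : Matrix (Fin m) (Fin r) ℝ} (hU : Uᵀ * U = 1) :
    Uᵀ * (1 - U * Uᵀ) = 0 := by
  rw [← transpose_one_sub_mul_transpose, ← transpose_mul, one_sub_mul_transpose_mul hU,
    transpose_zero]

lemma norm_col_le (A : Matrix (Fin m) (Fin k) ℝ) (i : Fin k) : ‖toLp 2 (Aᵀ i)‖ ≤ ‖A‖ := by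
  rw [show Aᵀ i = A *ᵥ Pi.single i 1 by rw [mulVec_single_one]; rfl]
  refine (norm_toLp_mulVec_le A _).trans ?_
  simp

lemma norm_col_sq (A : Matrix (Fin m) (Fin k) ℝ) (i : Fin k) :
    ‖toLp 2 (Aᵀ i)‖ ^ 2 = (Aᵀ * A) i i := by
  rw [← real_inner_self_eq_norm_sq, EuclideanSpace.inner_toLp_toLp]
  simp [mul_apply, dotProduct]

lemma transpose_mul_apply_self_le (A B : Matrix (Fin m) (Fin k) ℝ) (i : Fin k) :
    (Aᵀ * B) i i ≤ ‖toLp 2 (Aᵀ i)‖ * ‖toLp 2 (Bᵀ i)‖ := by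
  refine le_of_eq_of_le ?_ (real_inner_le_norm _ _)
  simp [EuclideanSpace.inner_toLp_toLp, mul_apply, dotProduct, mul_comm]

lemma inner_toLp_mulVec (A : Matrix (Fin m) (Fin k) ℝ) (B : Matrix (Fin m) (Fin l) ℝ)
    (x : Fin k → ℝ) (y : Fin l → ℝ) :
    ⟪toLp 2 (A *ᵥ x), toLp 2 (B *ᵥ y)⟫ = ⟪toLp 2 x, toLp 2 ((Aᵀ * B) *ᵥ y)⟫ := by
  simp only [EuclideanSpace.inner_toLp_toLp, star_trivial, ← mulVec_mulVec, dotProduct_mulVec,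
    mulVec_transpose]

lemma norm_sq_add_mulVec {A B : Matrix (Fin m) (Fin k) ℝ} (h : Aᵀ * B = 0) (x : Fin k → ℝ) :
    ‖toLp 2 ((A + B) *ᵥ x)‖ ^ 2 = ‖toLp 2 (A *ᵥ x)‖ ^ 2 + ‖toLp 2 (B *ᵥ x)‖ ^ 2 := by
  rw [add_mulVec, WithLp.toLp_add, norm_add_sq_real, inner_toLp_mulVec, h, zero_mulVec,
    WithLp.toLp_zero, inner_zero_right, mul_zero, add_zero]

/-- Pythagoras twice: `‖(A + B) x‖² = ‖A (Q x)‖² + ‖B ((1 - Q) x)‖² ≤ ‖Q x‖² + ‖(1 - Q) x‖²`. -/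
lemma norm_add_le_one_of_orthogonal {A B : Matrix (Fin m) (Fin k) ℝ}
    {Q : Matrix (Fin k) (Fin k) ℝ} (hQ : IsStarProjection Q) (hAB : Aᵀ * B = 0)
    (hAQ : A * Q = A) (hBQ : B * Q = 0) (hA : ‖A‖ ≤ 1) (hB : ‖B‖ ≤ 1) : ‖A + B‖ ≤ 1 := by
  obtain ⟨hQQ, hQt⟩ := isStarProjection_iff_transpose.mp hQ
  refine norm_le_of_forall_mulVec zero_le_one fun x => ?_
  have hsplit : ‖toLp 2 x‖ ^ 2 = ‖toLp 2 (Q *ᵥ x)‖ ^ 2 + ‖toLp 2 ((1 - Q) *ᵥ x)‖ ^ 2 := by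
    rw [← norm_sq_add_mulVec (by rw [hQt, Matrix.mul_sub, hQQ, Matrix.mul_one, sub_self]),
      add_sub_cancel, one_mulVec]
  have hAx : ‖toLp 2 (A *ᵥ x)‖ ≤ ‖toLp 2 (Q *ᵥ x)‖ := by
    rw [← hAQ, ← mulVec_mulVec]
    exact (norm_toLp_mulVec_le A _).trans (mul_le_of_le_one_left (norm_nonneg _) hA)
  have hBx : ‖toLp 2 (B *ᵥ x)‖ ≤ ‖toLp 2 ((1 - Q) *ᵥ x)‖ := by
    rw [show B = B * (1 - Q) by rw [Matrix.mul_sub, hBQ, Matrix.mul_one, sub_zero],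
      ← mulVec_mulVec]
    exact (norm_toLp_mulVec_le _ _).trans (mul_le_of_le_one_left (norm_nonneg _) hB)
  rw [one_mul]
  refine (pow_le_pow_iff_left₀ (norm_nonneg _) (norm_nonneg _) two_ne_zero).mp ?_
  rw [norm_sq_add_mulVec hAB, hsplit]
  gcongr

theorem norm_mul_transpose_add_le_one {U : Matrix (Fin m) (Fin r) ℝ}
    {V : Matrix (Fin k) (Fin r) ℝ} (hU : Uᵀ * U = 1) (hV : Vᵀ * V = 1)
    {W : Matrix (Fin m) (Fin k) ℝ} (hW : ‖W‖ ≤ 1) :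
    ‖U * Vᵀ + (1 - U * Uᵀ) * W * (1 - V * Vᵀ)‖ ≤ 1 := by
  refine norm_add_le_one_of_orthogonal (isStarProjection_mul_transpose hV) ?_ ?_ ?_ ?_ ?_
  · rw [transpose_mul, transpose_transpose, Matrix.mul_assoc, ← Matrix.mul_assoc Uᵀ,
      ← Matrix.mul_assoc Uᵀ, transpose_mul_one_sub_mul_transpose hU, Matrix.zero_mul,
      Matrix.zero_mul, Matrix.mul_zero]
  · rw [Matrix.mul_assoc, ← Matrix.mul_assoc Vᵀ, hV, Matrix.one_mul]
  · rw [Matrix.mul_assoc _ (1 - V * Vᵀ), ← Matrix.mul_assoc (1 - V * Vᵀ),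
      one_sub_mul_transpose_mul hV, Matrix.zero_mul, Matrix.mul_zero]
  · refine norm_le_one_of_isStarProjection ?_
    rw [transpose_mul, transpose_transpose, Matrix.mul_assoc, ← Matrix.mul_assoc Uᵀ, hU,
      Matrix.one_mul]
    exact isStarProjection_mul_transpose hV
  · have hP := (isStarProjection_mul_transpose hU).one_sub.norm_le
    have hQ := (isStarProjection_mul_transpose hV).one_sub.norm_le
    calc ‖(1 - U * Uᵀ) * W * (1 - V * Vᵀ)‖ ≤ ‖1 - U * Uᵀ‖ * ‖W‖ * ‖1 - V * Vᵀ‖ :=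
          (l2_opNorm_mul _ _).trans (mul_le_mul_of_nonneg_right (l2_opNorm_mul _ _) (norm_nonneg _))
      _ ≤ 1 * 1 * 1 := by gcongr
      _ = 1 := by norm_num

end SpectralNorm

section Frobenius

variable {m k : ℕ}

def frobVec : Matrix (Fin m) (Fin k) ℝ ≃ₗ[ℝ] EuclideanSpace ℝ (Fin k × Fin m) where
  toFun A := toLp 2 A.vec
  invFun v := Matrix.of fun i j => v (j, i)
  map_add' _ _ := rfl
  map_smul' _ _ := rfl
  left_inv _ := rfl
  right_inv _ := rfl

lemma norm_frobVec (A : Matrix (Fin m) (Fin k) ℝ) : ‖frobVec A‖ = frobNorm A := by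
  rw [EuclideanSpace.norm_eq, frobNorm, Finset.sum_comm, ← Finset.sum_product']
  simp only [Real.norm_eq_abs, sq_abs]
  rfl

lemma frobNorm_nonneg (A : Matrix (Fin m) (Fin k) ℝ) : 0 ≤ frobNorm A :=
  Real.sqrt_nonneg _

lemma frobNorm_smul (c : ℝ) (A : Matrix (Fin m) (Fin k) ℝ) :
    frobNorm (c • A) = |c| * frobNorm A := by
  rw [← norm_frobVec, map_smul, norm_smul, norm_frobVec, Real.norm_eq_abs]

lemma frobNorm_neg (A : Matrix (Fin m) (Fin k) ℝ) : frobNorm (-A) = frobNorm A := by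
  rw [← norm_frobVec, map_neg, norm_neg, norm_frobVec]

lemma eq_zero_of_frobNorm_eq_zero {A : Matrix (Fin m) (Fin k) ℝ} (h : frobNorm A = 0) :
    A = 0 :=
  frobVec.map_eq_zero_iff.mp (norm_eq_zero.mp (by rwa [norm_frobVec]))

lemma inner_frobVec (A B : Matrix (Fin m) (Fin k) ℝ) :
    ⟪frobVec A, frobVec B⟫ = (Aᵀ * B).trace := by
  rw [← vec_dotProduct_vec, dotProduct_comm]
  rfl

lemma inner_frobVec_eq_sum (A B : Matrix (Fin m) (Fin k) ℝ) :
    ⟪frobVec A, frobVec B⟫ = ∑ i, ∑ j, A i j * B i j := by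
  rw [inner_frobVec, trace, Finset.sum_comm]
  simp [mul_apply]

lemma inner_frobVec_mul_mul {l j : ℕ} (C : Matrix (Fin m) (Fin l) ℝ)
    (A : Matrix (Fin l) (Fin j) ℝ) (D : Matrix (Fin j) (Fin k) ℝ) (B : Matrix (Fin m) (Fin k) ℝ) :
    ⟪frobVec (C * A * D), frobVec B⟫ = ⟪frobVec A, frobVec (Cᵀ * B * Dᵀ)⟫ := by
  simp only [inner_frobVec, transpose_mul, Matrix.mul_assoc]
  rw [trace_mul_comm]
  simp only [Matrix.mul_assoc]

/-- `opNormMap` is a supremum of reals, so it only bounds `A` once the set of values is bounded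
above; for a linear `A` this holds by finite dimensionality. -/
lemma frobNorm_apply_le_of_opNormMap_le {n : ℕ}
    (A : Matrix (Fin n) (Fin n) ℝ →ₗ[ℝ] Matrix (Fin n) (Fin n) ℝ) {b : ℝ}
    (h : opNormMap A ≤ b) (Z : Matrix (Fin n) (Fin n) ℝ) : frobNorm (A Z) ≤ b * frobNorm Z := by
  set A' := LinearMap.toContinuousLinearMap
    (frobVec.toLinearMap ∘ₗ A ∘ₗ frobVec.symm.toLinearMap)
  have hbdd : BddAbove (Set.range fun W : {W : Matrix (Fin n) (Fin n) ℝ // frobNorm W ≤ 1} =>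
      frobNorm (A W.1)) := by
    refine ⟨‖A'‖, ?_⟩
    rintro _ ⟨W, rfl⟩
    have hW : frobNorm (A W.1) = ‖A' (frobVec W.1)‖ := by simp [A', ← norm_frobVec]
    exact hW.trans_le (A'.unit_le_opNorm _ (norm_frobVec W.1 ▸ W.2))
  rcases (frobNorm_nonneg Z).eq_or_lt with hZ | hZ
  · rw [eq_zero_of_frobNorm_eq_zero hZ.symm, map_zero]
    simp [frobNorm]
  · have hle := (le_ciSup hbdd ⟨(frobNorm Z)⁻¹ • Z, by
      rw [frobNorm_smul, abs_inv, abs_of_pos hZ, inv_mul_cancel₀ hZ.ne']⟩).trans h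
    rw [map_smul, frobNorm_smul, abs_inv, abs_of_pos hZ] at hle
    exact mul_comm (frobNorm Z) b ▸ (inv_mul_le_iff₀ hZ).mp hle

end Frobenius

section NuclearNorm

variable {m k r : ℕ}

lemma isHermitian_transpose_mul_self (X : Matrix (Fin m) (Fin k) ℝ) : (Xᵀ * X).IsHermitian := by
  simpa only [conjTranspose_eq_transpose_of_trivial] using isHermitian_conjTranspose_mul_self X

def rightSingularVectors (X : Matrix (Fin m) (Fin k) ℝ) : Matrix (Fin k) (Fin k) ℝ :=
  (isHermitian_transpose_mul_self X).eigenvectorUnitary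

def singularValue (X : Matrix (Fin m) (Fin k) ℝ) (i : Fin k) : ℝ :=
  √((isHermitian_transpose_mul_self X).eigenvalues i)

lemma nuclearNorm_eq_sum_singularValue (X : Matrix (Fin m) (Fin k) ℝ) :
    nuclearNorm X = ∑ i, singularValue X i := rfl

lemma singularValue_nonneg (X : Matrix (Fin m) (Fin k) ℝ) (i : Fin k) :
    0 ≤ singularValue X i :=
  Real.sqrt_nonneg _

lemma nuclearNorm_nonneg (X : Matrix (Fin m) (Fin k) ℝ) : 0 ≤ nuclearNorm X :=
  Finset.sum_nonneg fun i _ => singularValue_nonneg X i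

lemma rightSingularVectors_transpose_mul_self (X : Matrix (Fin m) (Fin k) ℝ) :
    (rightSingularVectors X)ᵀ * rightSingularVectors X = 1 := by
  simp [rightSingularVectors, ← conjTranspose_eq_transpose_of_trivial, ← star_eq_conjTranspose]

lemma rightSingularVectors_mul_transpose_self (X : Matrix (Fin m) (Fin k) ℝ) :
    rightSingularVectors X * (rightSingularVectors X)ᵀ = 1 := by
  simp [rightSingularVectors, ← conjTranspose_eq_transpose_of_trivial, ← star_eq_conjTranspose]

lemma gram_mul_rightSingularVectors (X : Matrix (Fin m) (Fin k) ℝ) :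
    (X * rightSingularVectors X)ᵀ * (X * rightSingularVectors X)
      = diagonal fun i => singularValue X i ^ 2 := by
  have h := (isHermitian_transpose_mul_self X).conjStarAlgAut_star_eigenvectorUnitary
  have hpsd : (Xᵀ * X).PosSemidef := by
    simpa only [conjTranspose_eq_transpose_of_trivial] using posSemidef_conjTranspose_mul_self X
  simp only [Unitary.conjStarAlgAut_apply, Unitary.coe_star, star_eq_conjTranspose,
    conjTranspose_eq_transpose_of_trivial, transpose_transpose] at h
  rw [transpose_mul, Matrix.mul_assoc, ← Matrix.mul_assoc Xᵀ, ← Matrix.mul_assoc,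
    rightSingularVectors, h]
  congr 1
  funext i
  simp [singularValue, Real.sq_sqrt (hpsd.eigenvalues_nonneg i)]

lemma norm_col_mul_rightSingularVectors (X : Matrix (Fin m) (Fin k) ℝ) (i : Fin k) :
    ‖toLp 2 ((X * rightSingularVectors X)ᵀ i)‖ = singularValue X i := by
  rw [← sq_eq_sq₀ (norm_nonneg _) (singularValue_nonneg X i), norm_col_sq,
    gram_mul_rightSingularVectors, diagonal_apply_eq]

lemma trace_transpose_mul_conj (Z X : Matrix (Fin m) (Fin k) ℝ) {Q : Matrix (Fin k) (Fin k) ℝ}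
    (hQ : Q * Qᵀ = 1) : ((Z * Q)ᵀ * (X * Q)).trace = (Zᵀ * X).trace := by
  rw [transpose_mul, Matrix.mul_assoc, trace_mul_comm, Matrix.mul_assoc, Matrix.mul_assoc, hQ,
    Matrix.mul_one]

theorem inner_frobVec_le_norm_mul_nuclearNorm (Z X : Matrix (Fin m) (Fin k) ℝ) :
    ⟪frobVec Z, frobVec X⟫ ≤ ‖Z‖ * nuclearNorm X := by
  set Q := rightSingularVectors X
  rw [inner_frobVec, ← trace_transpose_mul_conj Z X (rightSingularVectors_mul_transpose_self X),
    nuclearNorm_eq_sum_singularValue, Finset.mul_sum]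
  refine Finset.sum_le_sum fun i _ => (transpose_mul_apply_self_le _ _ i).trans ?_
  rw [norm_col_mul_rightSingularVectors]
  refine mul_le_mul_of_nonneg_right ?_ (singularValue_nonneg X i)
  calc ‖toLp 2 ((Z * Q)ᵀ i)‖ ≤ ‖Z * Q‖ := norm_col_le _ i
    _ ≤ ‖Z‖ * ‖Q‖ := l2_opNorm_mul Z Q
    _ ≤ ‖Z‖ := mul_le_of_le_one_right (norm_nonneg Z)
        (norm_le_one_of_transpose_mul_self (rightSingularVectors_transpose_mul_self X))

lemma isStarProjection_diagonal {d : Fin k → ℝ} (hd : ∀ i, d i * d i = d i) :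
    IsStarProjection (diagonal d) :=
  isStarProjection_iff_transpose.mpr ⟨by rw [diagonal_mul_diagonal]; simp only [hd],
    diagonal_transpose d⟩

/-- The witness is the polar factor `X Q Σ⁻¹ Qᵀ`; the junk value `0⁻¹ = 0` makes it vanish on the
kernel of `X`. -/
theorem exists_norm_le_one_inner_frobVec_eq_nuclearNorm (X : Matrix (Fin m) (Fin k) ℝ) :
    ∃ Z, ‖Z‖ ≤ 1 ∧ ⟪frobVec Z, frobVec X⟫ = nuclearNorm X := by
  set Q := rightSingularVectors X
  set σ := singularValue X
  set C := X * Q * diagonal σ⁻¹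
  have hC : Cᵀ * (X * Q) = diagonal σ := by
    rw [transpose_mul, diagonal_transpose, Matrix.mul_assoc, gram_mul_rightSingularVectors,
      diagonal_mul_diagonal]
    simp only [Pi.inv_apply, sq, ← mul_assoc]
    exact congrArg diagonal (funext fun i => inv_mul_mul_self (σ i))
  have hCC : Cᵀ * C = diagonal fun i => σ i * (σ i)⁻¹ := by
    rw [show C = X * Q * diagonal σ⁻¹ from rfl, ← Matrix.mul_assoc, hC, diagonal_mul_diagonal]
    rfl
  refine ⟨C * Qᵀ, ?_, ?_⟩
  · calc ‖C * Qᵀ‖ ≤ ‖C‖ * ‖Qᵀ‖ := l2_opNorm_mul _ _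
      _ ≤ 1 * 1 := by
        gcongr
        · exact norm_le_one_of_isStarProjection <| hCC ▸ isStarProjection_diagonal fun i => by
            rw [← mul_assoc, mul_inv_mul_cancel]
        · exact norm_le_one_of_transpose_mul_self <| by
            rw [transpose_transpose, rightSingularVectors_mul_transpose_self]
      _ = 1 := one_mul 1
  · rw [inner_frobVec, ← trace_transpose_mul_conj _ X (rightSingularVectors_mul_transpose_self X),
      Matrix.mul_assoc C, rightSingularVectors_transpose_mul_self, Matrix.mul_one, hC,
      trace_diagonal, nuclearNorm_eq_sum_singularValue]

lemma frobNorm_le_nuclearNorm (X : Matrix (Fin m) (Fin k) ℝ) : frobNorm X ≤ nuclearNorm X := by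
  have hsq : frobNorm X ^ 2 = ∑ i, singularValue X i ^ 2 := by
    rw [← norm_frobVec, ← real_inner_self_eq_norm_sq, inner_frobVec,
      ← trace_transpose_mul_conj X X (rightSingularVectors_mul_transpose_self X),
      gram_mul_rightSingularVectors, trace_diagonal]
  rw [← pow_le_pow_iff_left₀ (frobNorm_nonneg X) (nuclearNorm_nonneg X) two_ne_zero, hsq,
    nuclearNorm_eq_sum_singularValue]
  exact Finset.sum_sq_le_sq_sum_of_nonneg fun i _ => singularValue_nonneg X i

variable {U : Matrix (Fin m) (Fin r) ℝ} {V : Matrix (Fin k) (Fin r) ℝ}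

theorem nuclearNorm_mul_diagonal_mul_le (hU : Uᵀ * U = 1) (hV : Vᵀ * V = 1) {d : Fin r → ℝ}
    (hd : ∀ a, 0 ≤ d a) : nuclearNorm (U * diagonal d * Vᵀ) ≤ ∑ a, d a := by
  obtain ⟨Z, hZ, hZX⟩ := exists_norm_le_one_inner_frobVec_eq_nuclearNorm (U * diagonal d * Vᵀ)
  have hU1 := norm_le_one_of_transpose_mul_self hU
  have hV1 := norm_le_one_of_transpose_mul_self hV
  rw [← hZX, inner_frobVec, ← Matrix.mul_assoc, trace_mul_comm, ← Matrix.mul_assoc,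
    ← Matrix.mul_assoc, ← transpose_mul, trace]
  refine Finset.sum_le_sum fun a _ => ?_
  rw [diag_apply, mul_diagonal]
  refine mul_le_of_le_one_left (hd a) ((transpose_mul_apply_self_le _ _ a).trans ?_)
  calc ‖toLp 2 ((Z * V)ᵀ a)‖ * ‖toLp 2 (Uᵀ a)‖ ≤ (‖Z‖ * ‖V‖) * ‖U‖ := by
        gcongr
        · exact (norm_col_le _ a).trans (l2_opNorm_mul Z V)
        · exact norm_col_le U a
    _ ≤ (1 * 1) * 1 := by gcongr
    _ = 1 := by norm_num

lemma inner_mul_transpose_mul_diagonal_mul (hU : Uᵀ * U = 1) (hV : Vᵀ * V = 1)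
    (d : Fin r → ℝ) : ⟪frobVec (U * Vᵀ), frobVec (U * diagonal d * Vᵀ)⟫ = ∑ a, d a := by
  rw [inner_frobVec, transpose_mul, transpose_transpose, Matrix.mul_assoc, ← Matrix.mul_assoc Uᵀ,
    ← Matrix.mul_assoc Uᵀ, hU, Matrix.one_mul, trace_mul_comm, Matrix.mul_assoc, hV,
    Matrix.mul_one, trace_diagonal]

/-- `UVᵀ + (1 - UUᵀ) W (1 - VVᵀ)`, with `W` dual to `(1 - UUᵀ) Δ (1 - VVᵀ)`, is a subgradient of
the nuclear norm at `U diag(d) Vᵀ`. -/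
theorem nuclearNorm_add_ge (hU : Uᵀ * U = 1) (hV : Vᵀ * V = 1) {d : Fin r → ℝ}
    (hd : ∀ a, 0 ≤ d a) (Δ : Matrix (Fin m) (Fin k) ℝ) :
    nuclearNorm (U * diagonal d * Vᵀ) + ⟪frobVec (U * Vᵀ), frobVec Δ⟫
        + nuclearNorm ((1 - U * Uᵀ) * Δ * (1 - V * Vᵀ))
      ≤ nuclearNorm (U * diagonal d * Vᵀ + Δ) := by
  obtain ⟨W, hW, hWΔ⟩ :=
    exists_norm_le_one_inner_frobVec_eq_nuclearNorm ((1 - U * Uᵀ) * Δ * (1 - V * Vᵀ))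
  have hWM : ⟪frobVec ((1 - U * Uᵀ) * W * (1 - V * Vᵀ)), frobVec (U * diagonal d * Vᵀ)⟫ = 0 := by
    rw [inner_frobVec_mul_mul, transpose_one_sub_mul_transpose, transpose_one_sub_mul_transpose,
      ← Matrix.mul_assoc, ← Matrix.mul_assoc, one_sub_mul_transpose_mul hU, Matrix.zero_mul,
      Matrix.zero_mul, Matrix.zero_mul, map_zero, inner_zero_right]
  have hWΔ' : ⟪frobVec ((1 - U * Uᵀ) * W * (1 - V * Vᵀ)), frobVec Δ⟫
      = nuclearNorm ((1 - U * Uᵀ) * Δ * (1 - V * Vᵀ)) := by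
    rw [inner_frobVec_mul_mul, transpose_one_sub_mul_transpose, transpose_one_sub_mul_transpose,
      hWΔ]
  have hcert := inner_frobVec_le_norm_mul_nuclearNorm
    (U * Vᵀ + (1 - U * Uᵀ) * W * (1 - V * Vᵀ)) (U * diagonal d * Vᵀ + Δ)
  rw [map_add, map_add, inner_add_left, inner_add_right, inner_add_right,
    inner_mul_transpose_mul_diagonal_mul hU hV, hWM, hWΔ'] at hcert
  have hnorm := mul_le_of_le_one_left (nuclearNorm_nonneg (U * diagonal d * Vᵀ + Δ))
    (norm_mul_transpose_add_le_one hU hV hW)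
  linarith [nuclearNorm_mul_diagonal_mul_le hU hV hd]

end NuclearNorm

section Projections

variable {n r : ℕ}

open Classical in
lemma projS_apply (Ω : Set (Fin n × Fin n)) (Z : Matrix (Fin n) (Fin n) ℝ) (i j : Fin n) :
    projS Ω Z i j = if (i, j) ∈ Ω then Z i j else 0 := rfl

def projSₗ (Ω : Set (Fin n × Fin n)) :
    Matrix (Fin n) (Fin n) ℝ →ₗ[ℝ] Matrix (Fin n) (Fin n) ℝ where
  toFun := projS Ω
  map_add' A B := by ext i j; simp only [projS_apply, Matrix.add_apply]; split_ifs <;> simp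
  map_smul' c A := by ext i j; simp only [projS_apply, Matrix.smul_apply]; split_ifs <;> simp

lemma projS_sub (Ω : Set (Fin n × Fin n)) (A B : Matrix (Fin n) (Fin n) ℝ) :
    projS Ω (A - B) = projS Ω A - projS Ω B :=
  map_sub (projSₗ Ω) A B

lemma projS_projS (Ω : Set (Fin n × Fin n)) (Z : Matrix (Fin n) (Fin n) ℝ) :
    projS Ω (projS Ω Z) = projS Ω Z := by
  ext i j; simp only [projS_apply]; split_ifs <;> rfl

lemma inner_projS_left (Ω : Set (Fin n × Fin n)) (Y Z : Matrix (Fin n) (Fin n) ℝ) :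
    ⟪frobVec (projS Ω Y), frobVec Z⟫ = ⟪frobVec Y, frobVec (projS Ω Z)⟫ := by
  simp only [inner_frobVec_eq_sum, projS_apply]
  refine Finset.sum_congr rfl fun i _ => Finset.sum_congr rfl fun j _ => ?_
  split_ifs <;> simp

lemma inner_projS_right_self (Ω : Set (Fin n × Fin n)) (Z : Matrix (Fin n) (Fin n) ℝ) :
    ⟪frobVec Z, frobVec (projS Ω Z)⟫ = frobNorm (projS Ω Z) ^ 2 := by
  rw [← projS_projS, ← inner_projS_left, projS_projS, real_inner_self_eq_norm_sq, norm_frobVec]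

lemma frobNorm_projS_le (Ω : Set (Fin n × Fin n)) (Z : Matrix (Fin n) (Fin n) ℝ) :
    frobNorm (projS Ω Z) ≤ frobNorm Z := by
  refine Real.sqrt_le_sqrt (Finset.sum_le_sum fun i _ => Finset.sum_le_sum fun j _ => ?_)
  rw [projS_apply]
  split_ifs <;> simp [sq_nonneg]

variable (U V : Matrix (Fin n) (Fin r) ℝ)

lemma sub_projT (Z : Matrix (Fin n) (Fin n) ℝ) :
    Z - projT U V Z = (1 - U * Uᵀ) * Z * (1 - V * Vᵀ) := by
  simp only [projT, Matrix.sub_mul, Matrix.mul_sub, Matrix.one_mul, Matrix.mul_one,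
    Matrix.mul_assoc]
  abel

lemma projT_eq_sub (Z : Matrix (Fin n) (Fin n) ℝ) :
    projT U V Z = Z - (1 - U * Uᵀ) * Z * (1 - V * Vᵀ) := by
  rw [← sub_projT, sub_sub_cancel]

def projTₗ : Matrix (Fin n) (Fin n) ℝ →ₗ[ℝ] Matrix (Fin n) (Fin n) ℝ where
  toFun := projT U V
  map_add' A B := by simp only [projT, Matrix.mul_add, Matrix.add_mul]; abel
  map_smul' c A := by
    simp only [projT, Matrix.mul_smul, Matrix.smul_mul, smul_add, smul_sub]; rfl

lemma projT_sub (A B : Matrix (Fin n) (Fin n) ℝ) :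
    projT U V (A - B) = projT U V A - projT U V B :=
  map_sub (projTₗ U V) A B

lemma inner_projT_left (Y Z : Matrix (Fin n) (Fin n) ℝ) :
    ⟪frobVec (projT U V Y), frobVec Z⟫ = ⟪frobVec Y, frobVec (projT U V Z)⟫ := by
  simp only [projT_eq_sub, map_sub, inner_sub_left, inner_sub_right, inner_frobVec_mul_mul,
    transpose_one_sub_mul_transpose]

variable {U V}

lemma projT_projT (hU : Uᵀ * U = 1) (hV : Vᵀ * V = 1) (Z : Matrix (Fin n) (Fin n) ℝ) :
    projT U V (projT U V Z) = projT U V Z := by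
  obtain ⟨hP, -⟩ := isStarProjection_iff_transpose.mp (isStarProjection_mul_transpose hU).one_sub
  obtain ⟨hQ, -⟩ := isStarProjection_iff_transpose.mp (isStarProjection_mul_transpose hV).one_sub
  rw [projT_eq_sub U V (projT U V Z), projT_eq_sub U V Z]
  set P := 1 - U * Uᵀ
  set Q := 1 - V * Vᵀ
  calc Z - P * Z * Q - P * (Z - P * Z * Q) * Q
        = Z - P * Z * Q - (P * Z * Q - (P * P) * Z * (Q * Q)) := by
          simp only [Matrix.mul_sub, Matrix.sub_mul, Matrix.mul_assoc]
    _ = Z - P * Z * Q := by rw [hP, hQ, sub_self, sub_zero]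

lemma projT_mul_transpose (hU : Uᵀ * U = 1) : projT U V (U * Vᵀ) = U * Vᵀ := by
  rw [projT_eq_sub, ← Matrix.mul_assoc, one_sub_mul_transpose_mul hU, Matrix.zero_mul,
    Matrix.zero_mul, sub_zero]

end Projections

section Certificates

variable {n r : ℕ} {U V : Matrix (Fin n) (Fin r) ℝ} {Ω : Set (Fin n × Fin n)}

/-- Split `UVᵀ = Y - (P_T Y - UVᵀ) - P_{T⊥} Y`; `Y` is orthogonal to `Δ`, the middle term lies in
`T` and the last in `T⊥`. -/
theorem inner_mul_transpose_ge (hU : Uᵀ * U = 1) (hV : Vᵀ * V = 1)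
    {Y Δ : Matrix (Fin n) (Fin n) ℝ} (hY : projS Ω Y = Y) (hΔ : projS Ω Δ = 0) :
    -(frobNorm (projT U V Y - U * Vᵀ) * frobNorm (projT U V Δ))
        - ‖Y - projT U V Y‖ * nuclearNorm (Δ - projT U V Δ)
      ≤ ⟪frobVec (U * Vᵀ), frobVec Δ⟫ := by
  have hYΔ : ⟪frobVec Y, frobVec Δ⟫ = 0 := by
    rw [← hY, inner_projS_left, hΔ, map_zero, inner_zero_right]
  have hT : ⟪frobVec (projT U V Y - U * Vᵀ), frobVec Δ⟫
      = ⟪frobVec (projT U V Y - U * Vᵀ), frobVec (projT U V Δ)⟫ := by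
    rw [← inner_projT_left, projT_sub, projT_projT hU hV, projT_mul_transpose hU]
  have hTperp : ⟪frobVec (Y - projT U V Y), frobVec Δ⟫
      = ⟪frobVec (Y - projT U V Y), frobVec (Δ - projT U V Δ)⟫ := by
    rw [map_sub frobVec Δ, inner_sub_right, ← inner_projT_left, projT_sub, projT_projT hU hV,
      sub_self, map_zero, inner_zero_left, sub_zero]
  have hsplit : frobVec (U * Vᵀ)
      = frobVec Y - frobVec (projT U V Y - U * Vᵀ) - frobVec (Y - projT U V Y) := by
    rw [← map_sub, ← map_sub]; congr 1; abel
  have hCS := real_inner_le_norm (frobVec (projT U V Y - U * Vᵀ)) (frobVec (projT U V Δ))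
  rw [norm_frobVec, norm_frobVec] at hCS
  have hdual := inner_frobVec_le_norm_mul_nuclearNorm (Y - projT U V Y) (Δ - projT U V Δ)
  rw [hsplit, inner_sub_left, inner_sub_left, hYΔ, hT, hTperp]
  linarith

/-- For `G ∈ T`, `⟪G, (P_T R_Ω P_T - P_T) G⟫ = p⁻¹ ‖P_Ω G‖_F² - ‖G‖_F²`. -/
theorem frobNorm_sq_le_of_opNormMap_le {p : ℝ}
    (hop : opNormMap
      (fun Z => projT U V (p⁻¹ • projS Ω (projT U V Z)) - projT U V Z) ≤ 1 / 2)
    {G : Matrix (Fin n) (Fin n) ℝ} (hG : projT U V G = G) :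
    frobNorm G ^ 2 ≤ 2 * p⁻¹ * frobNorm (projS Ω G) ^ 2 := by
  have hA := frobNorm_apply_le_of_opNormMap_le
    (projTₗ U V ∘ₗ (p⁻¹ • projSₗ Ω) ∘ₗ projTₗ U V - projTₗ U V) hop G
  change frobNorm (projT U V (p⁻¹ • projS Ω (projT U V G)) - projT U V G) ≤ _ at hA
  rw [hG] at hA
  have hinner : ⟪frobVec G, frobVec (projT U V (p⁻¹ • projS Ω G) - G)⟫
      = p⁻¹ * frobNorm (projS Ω G) ^ 2 - frobNorm G ^ 2 := by
    rw [map_sub, inner_sub_right, ← inner_projT_left, hG, map_smul, inner_smul_right,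
      inner_projS_right_self, real_inner_self_eq_norm_sq, norm_frobVec]
  have hCS := neg_le_of_abs_le (abs_real_inner_le_norm (frobVec G)
    (frobVec (projT U V (p⁻¹ • projS Ω G) - G)))
  rw [hinner, norm_frobVec, norm_frobVec] at hCS
  nlinarith [mul_le_mul_of_nonneg_left hA (frobNorm_nonneg G)]

theorem frobNorm_projT_sq_le (hU : Uᵀ * U = 1) (hV : Vᵀ * V = 1) {p : ℝ}
    (hop : opNormMap
      (fun Z => projT U V (p⁻¹ • projS Ω (projT U V Z)) - projT U V Z) ≤ 1 / 2)
    (hp : p⁻¹ ≤ n) {Δ : Matrix (Fin n) (Fin n) ℝ} (hΔ : projS Ω Δ = 0) :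
    frobNorm (projT U V Δ) ^ 2 ≤ 2 * n * nuclearNorm (Δ - projT U V Δ) ^ 2 := by
  have hPΩG : frobNorm (projS Ω (projT U V Δ)) ≤ nuclearNorm (Δ - projT U V Δ) :=
    calc frobNorm (projS Ω (projT U V Δ)) = frobNorm (projS Ω (Δ - projT U V Δ)) := by
          rw [projS_sub Ω Δ, hΔ, zero_sub, frobNorm_neg]
      _ ≤ frobNorm (Δ - projT U V Δ) := frobNorm_projS_le Ω _
      _ ≤ nuclearNorm (Δ - projT U V Δ) := frobNorm_le_nuclearNorm _
  calc frobNorm (projT U V Δ) ^ 2 ≤ 2 * p⁻¹ * frobNorm (projS Ω (projT U V Δ)) ^ 2 :=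
        frobNorm_sq_le_of_opNormMap_le hop (projT_projT hU hV Δ)
    _ ≤ 2 * n * frobNorm (projS Ω (projT U V Δ)) ^ 2 := by gcongr
    _ ≤ 2 * n * nuclearNorm (Δ - projT U V Δ) ^ 2 := by
        gcongr
        exact frobNorm_nonneg _

theorem nuclearNorm_sub_projT_pos (hU : Uᵀ * U = 1) (hV : Vᵀ * V = 1) {p : ℝ}
    (hop : opNormMap
      (fun Z => projT U V (p⁻¹ • projS Ω (projT U V Z)) - projT U V Z) ≤ 1 / 2)
    (hp : p⁻¹ ≤ n) {Δ : Matrix (Fin n) (Fin n) ℝ} (hΔ : projS Ω Δ = 0) (hΔ0 : Δ ≠ 0) :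
    0 < nuclearNorm (Δ - projT U V Δ) := by
  refine (nuclearNorm_nonneg _).lt_of_ne fun hν => hΔ0 ?_
  have hG := frobNorm_projT_sq_le hU hV hop hp hΔ
  rw [← hν, zero_pow two_ne_zero, mul_zero] at hG
  have hE : Δ - projT U V Δ = 0 := eq_zero_of_frobNorm_eq_zero
    (le_antisymm (hν ▸ frobNorm_le_nuclearNorm _) (frobNorm_nonneg _))
  rw [← sub_add_cancel Δ (projT U V Δ), hE, eq_zero_of_frobNorm_eq_zero
    (pow_eq_zero_iff two_ne_zero |>.mp (le_antisymm hG (sq_nonneg _))), add_zero]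

end Certificates

lemma one_div_four_mul_mul_lt_half {n g ν : ℝ} (hn : 1 ≤ n) (hg : 0 ≤ g) (hν : 0 < ν)
    (h : g ^ 2 ≤ 2 * n * ν ^ 2) : 1 / (4 * n) * g < ν / 2 := by
  have hg' : g < 2 * n * ν :=
    (pow_lt_pow_iff_left₀ hg (by positivity) two_ne_zero).mp (by nlinarith [mul_pos hν hν])
  rw [one_div_mul_eq_div, div_lt_iff₀ (by positivity)]
  linarith

/-- Proposition 2: subgradient optimality condition.
If p ≥ 1/n, ‖P_T R_Ω P_T − P_T‖_op ≤ 1/2, and there is a dual certificate Y with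
P_Ω(Y) = Y, ‖P_{T⊥}(Y)‖ ≤ 1/2, and ‖P_T(Y) − UVᵀ‖_F ≤ 1/(4n), then M is the unique
optimal solution of nuclear norm minimization over matrices agreeing with M on Ω. -/
theorem statement4 (n r : ℕ) (M : Matrix (Fin n) (Fin n) ℝ)
    (U V : Matrix (Fin n) (Fin r) ℝ) (S : Matrix (Fin r) (Fin r) ℝ)
    (Ω : Set (Fin n × Fin n)) (p : ℝ)
    -- reduced SVD of M with rank r
    (hU : Uᵀ * U = 1) (hV : Vᵀ * V = 1)
    (hSdiag : ∀ i j, i ≠ j → S i j = 0) (hSpos : ∀ i, 0 < S i i)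
    (hM : M = U * S * Vᵀ)
    (hp : 1 / (n : ℝ) ≤ p)
    -- condition (1): ‖P_T R_Ω P_T − P_T‖_op ≤ 1/2
    (hop : opNormMap
      (fun Z => projT U V (p⁻¹ • projS Ω (projT U V Z)) - projT U V Z) ≤ 1 / 2)
    -- condition (2): existence of a dual certificate
    (hY : ∃ Y : Matrix (Fin n) (Fin n) ℝ, projS Ω Y = Y ∧
      specNorm (Y - projT U V Y) ≤ 1 / 2 ∧
      frobNorm (projT U V Y - U * Vᵀ) ≤ 1 / (4 * n)) :
    ∀ X : Matrix (Fin n) (Fin n) ℝ,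
      (∀ i j, (i, j) ∈ Ω → X i j = M i j) → X ≠ M →
      nuclearNorm M < nuclearNorm X := by
  intro X hX hXM
  rcases Nat.eq_zero_or_pos n with rfl | hn
  · exact absurd (Subsingleton.elim X M) hXM
  have hn1 : (1 : ℝ) ≤ n := Nat.one_le_cast.mpr hn
  have hpn : p⁻¹ ≤ n := inv_le_of_inv_le₀ (by positivity) (one_div (n : ℝ) ▸ hp)
  obtain ⟨Y, hYΩ, hYspec, hYfrob⟩ := hY
  have hS : S = diagonal fun i => S i i := by
    ext i j; by_cases h : i = j <;> simp [h, hSdiag]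
  have hΔ : projS Ω (X - M) = 0 := by
    ext i j; rw [projS_apply]; split_ifs with h
    · simp [hX i j h]
    · rfl
  have hsub := nuclearNorm_add_ge hU hV (fun i => (hSpos i).le) (X - M)
  rw [← hS, ← hM, ← sub_projT, add_sub_cancel] at hsub
  have hcert := inner_mul_transpose_ge hU hV hYΩ hΔ
  have hν := nuclearNorm_sub_projT_pos hU hV hop hpn hΔ (sub_ne_zero.mpr hXM)
  have hgap := one_div_four_mul_mul_lt_half hn1 (frobNorm_nonneg _) hν
    (frobNorm_projT_sq_le hU hV hop hpn hΔ)
  rw [specNorm_eq_norm] at hYspec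
  linarith [mul_le_mul_of_nonneg_right hYfrob (frobNorm_nonneg (projT U V (X - M))),
    mul_le_mul_of_nonneg_right hYspec hν.le]

end
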